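/- For every integer m ≥ 1, the operator 𝓛 maps 𝓕_w^m into 𝓕_w^{m−1}: if f ∈ 𝓕_w^m, then 𝓛f ∈ 𝓕_w^{m−1} (where 𝓕_w^0 = 𝓡_w). In particular, if the principal term of f is p(ℓ)e^ℓ with deg p < m, then the principal term of 𝓛f is a polynomial of degree < m−1 times e^ℓ. -/

import Mathlib

open MeasureTheory Real Set

noncomputable section

/-- The class `𝓡_w^c`: continuous functions on `[0,∞)` whose integral of the modulus up to `n`
is `≤ c₁ (n+1)^c e^{n/2}` for every integer `n ≥ 1`. -/
def memRwC (c : ℝ) (f : ℝ → ℂ) : Prop :=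
  ContinuousOn f (Set.Ici 0) ∧
  ∃ c₁ : ℝ, 0 < c₁ ∧ ∀ n : ℕ, 1 ≤ n →
    (∫ s in (0:ℝ)..(n:ℝ), ‖f s‖) ≤ c₁ * ((n:ℝ) + 1) ^ c * Real.exp ((n:ℝ) / 2)

/-- The class `𝓡_w = ⋃_{c ≥ 0} 𝓡_w^c`. -/
def memRw (f : ℝ → ℂ) : Prop := ∃ c : ℝ, 0 ≤ c ∧ memRwC c f

/-- The class `𝓕_w^m` of weak Friedman–Ramanujan functions with polynomial part of
degree `< m` (so `𝓕_w^0 = 𝓡_w`). -/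
def memFw (m : ℕ) (f : ℝ → ℂ) : Prop :=
  ContinuousOn f (Set.Ici 0) ∧
  ∃ p : Polynomial ℂ, p.degree < (m : ℕ) ∧
    memRw (fun ℓ : ℝ => f ℓ - p.eval (ℓ : ℂ) * Complex.exp ℓ)

/-- The primitive operator `𝒫 f (x) = ∫₀ˣ f(t) dt`. -/
def Pop (f : ℝ → ℂ) : ℝ → ℂ := fun x => ∫ t in (0:ℝ)..x, f t

/-- The operator `𝓛 = Id − 𝒫`. -/
def Lop (f : ℝ → ℂ) : ℝ → ℂ := fun x => f x - Pop f x

/-!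
Write `f = p(ℓ) eˡ + g` with `g ∈ 𝓡_w`. Solving `P + P' = p` with `deg P ≤ deg p`, the function
`P(ℓ) eˡ` is a primitive of `p(ℓ) eˡ`, so `𝓛 (p(ℓ) eˡ) = P'(ℓ) eˡ + P(0)`: the operator `𝓛`
lowers the degree of the principal term by one. The remainder `𝓛 g + P(0)` stays in `𝓡_w`,
because `𝒫` costs at most one power of `n + 1` in the defining bound.
-/

open Polynomial

namespace Polynomial

variable {R : Type*}

theorem exists_add_derivative_eq [Ring R] (p : R[X]) :
    ∃ P : R[X], P + derivative P = p ∧ P.degree ≤ p.degree := by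
  suffices ∀ n, ∀ p : R[X], p.natDegree ≤ n → ∃ P, P + derivative P = p ∧ P.degree ≤ p.degree from
    this _ p le_rfl
  intro n
  induction n with
  | zero =>
    intro p hp
    refine ⟨p, ?_, le_rfl⟩
    rw [eq_C_of_natDegree_le_zero hp, derivative_C, add_zero]
  | succ n ih =>
    intro p hp
    obtain ⟨Q, hQ, hQdeg⟩ := ih (derivative p) (by have := natDegree_derivative_le p; omega)
    have hderiv : derivative (p - Q) = Q := by rw [derivative_sub, ← hQ]; abel
    refine ⟨p - Q, by rw [hderiv, sub_add_cancel], ?_⟩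
    exact (degree_sub_le _ _).trans (max_le le_rfl (hQdeg.trans degree_derivative_le))

theorem degree_derivative_lt_pred [Semiring R] {p : R[X]} {m : ℕ} (hp : p.degree < m) :
    (derivative p).degree < ↑(m - 1) := by
  rw [degree_lt_iff_coeff_zero] at hp ⊢
  intro k hk
  rw [coeff_derivative, hp (k + 1) (by omega), zero_mul]

end Polynomial

theorem ContinuousOn.intervalIntegrable_of_Ici {E : Type*} [NormedAddCommGroup E] {f : ℝ → E}
    {a b : ℝ} (hf : ContinuousOn f (Ici a)) (hab : a ≤ b) : IntervalIntegrable f volume a b :=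
  (hf.mono Icc_subset_Ici_self).intervalIntegrable_of_Icc hab

theorem integral_add_derivative_eval_mul_exp (P : ℂ[X]) (x : ℝ) :
    ∫ t in (0:ℝ)..x, (P + derivative P).eval (t:ℂ) * Complex.exp t =
      P.eval (x:ℂ) * Complex.exp x - P.eval 0 := by
  have hderiv (t : ℝ) : HasDerivAt (fun s : ℝ => P.eval (s:ℂ) * Complex.exp s)
      ((P + derivative P).eval (t:ℂ) * Complex.exp t) t := by
    have := (P.hasDerivAt (t:ℂ)).mul (Complex.hasDerivAt_exp (t:ℂ))
    rw [eval_add, add_mul, add_comm]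
    exact this.comp_ofReal
  have hcont : Continuous fun t : ℝ => (P + derivative P).eval (t:ℂ) * Complex.exp t := by
    fun_prop
  simpa using intervalIntegral.integral_eq_sub_of_hasDerivAt (fun t _ => hderiv t)
    (hcont.intervalIntegrable 0 x)

theorem continuousOn_Pop {f : ℝ → ℂ} (hf : ContinuousOn f (Ici 0)) :
    ContinuousOn (Pop f) (Ici 0) := by
  intro x hx
  have hx0 : (0:ℝ) ≤ x := hx
  have hwithin : ContinuousWithinAt (Pop f) (Icc 0 (x + 1)) x :=
    intervalIntegral.continuousWithinAt_primitive (Real.volume_singleton)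
      (by rw [min_self, max_eq_right (by linarith)]; exact hf.intervalIntegrable_of_Ici (by linarith))
  refine hwithin.mono_of_mem_nhdsWithin ?_
  rw [← Ici_inter_Iic]
  exact inter_mem_nhdsWithin _ (Iic_mem_nhds (by linarith))

theorem Lop_add {f g : ℝ → ℂ} {x : ℝ} (hf : IntervalIntegrable f volume 0 x)
    (hg : IntervalIntegrable g volume 0 x) :
    Lop (fun t => f t + g t) x = Lop f x + Lop g x := by
  simp only [Lop, Pop, intervalIntegral.integral_add hf hg]
  ring

theorem Lop_add_derivative_eval_mul_exp (P : ℂ[X]) (x : ℝ) :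
    Lop (fun t => (P + derivative P).eval (t:ℂ) * Complex.exp t) x =
      (derivative P).eval (x:ℂ) * Complex.exp x + P.eval 0 := by
  simp only [Lop, Pop]
  rw [integral_add_derivative_eval_mul_exp, eval_add]
  ring

namespace memRwC

variable {c : ℝ} {f g h : ℝ → ℂ}

theorem mono {c' : ℝ} (hf : memRwC c f) (hcc' : c ≤ c') : memRwC c' f := by
  obtain ⟨hfc, c₁, hc₁, hbound⟩ := hf
  refine ⟨hfc, c₁, hc₁, fun n hn => (hbound n hn).trans ?_⟩
  have hpow : ((n:ℝ) + 1) ^ c ≤ ((n:ℝ) + 1) ^ c' :=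
    Real.rpow_le_rpow_of_exponent_le (by linarith [n.cast_nonneg (α := ℝ)]) hcc'
  gcongr

theorem of_norm_le (hf : memRwC c f) (hg : memRwC c g) (hh : ContinuousOn h (Ici 0))
    (hle : ∀ x ∈ Ici (0:ℝ), ‖h x‖ ≤ ‖f x‖ + ‖g x‖) : memRwC c h := by
  obtain ⟨hfc, a, ha, hfa⟩ := hf
  obtain ⟨hgc, b, hb, hgb⟩ := hg
  refine ⟨hh, a + b, add_pos ha hb, fun n hn => ?_⟩
  have hn0 : (0:ℝ) ≤ n := n.cast_nonneg
  have hfi := hfc.norm.intervalIntegrable_of_Ici hn0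
  have hgi := hgc.norm.intervalIntegrable_of_Ici hn0
  calc ∫ s in (0:ℝ)..n, ‖h s‖ ≤ ∫ s in (0:ℝ)..n, (‖f s‖ + ‖g s‖) :=
        intervalIntegral.integral_mono_on hn0 (hh.norm.intervalIntegrable_of_Ici hn0)
          (hfi.add hgi) fun x hx => hle x hx.1
    _ = (∫ s in (0:ℝ)..n, ‖f s‖) + ∫ s in (0:ℝ)..n, ‖g s‖ :=
        intervalIntegral.integral_add hfi hgi
    _ ≤ _ := by rw [add_mul, add_mul]; exact add_le_add (hfa n hn) (hgb n hn)

theorem add (hf : memRwC c f) (hg : memRwC c g) : memRwC c (fun x => f x + g x) :=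
  hf.of_norm_le hg (hf.1.add hg.1) fun _ _ => norm_add_le _ _

theorem sub (hf : memRwC c f) (hg : memRwC c g) : memRwC c (fun x => f x - g x) :=
  hf.of_norm_le hg (hf.1.sub hg.1) fun _ _ => norm_sub_le _ _

theorem const (K : ℂ) : memRwC 1 (fun _ => K) := by
  refine ⟨continuousOn_const, ‖K‖ + 1, by positivity, fun n _ => ?_⟩
  have hn0 : (0:ℝ) ≤ n := n.cast_nonneg
  have hexp : 1 ≤ Real.exp ((n:ℝ) / 2) := Real.one_le_exp (by positivity)
  rw [intervalIntegral.integral_const, smul_eq_mul, sub_zero, Real.rpow_one]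
  calc (n:ℝ) * ‖K‖ ≤ (‖K‖ + 1) * ((n:ℝ) + 1) := by nlinarith [norm_nonneg K]
    _ ≤ (‖K‖ + 1) * ((n:ℝ) + 1) * Real.exp ((n:ℝ) / 2) :=
        le_mul_of_one_le_right (by positivity) hexp

theorem Pop (hf : memRwC c f) : memRwC (c + 1) (Pop f) := by
  obtain ⟨hfc, c₁, hc₁, hbound⟩ := hf
  refine ⟨continuousOn_Pop hfc, c₁, hc₁, fun n hn => ?_⟩
  have hn0 : (0:ℝ) ≤ n := n.cast_nonneg
  set A := ∫ s in (0:ℝ)..n, ‖f s‖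
  have hPop_le : ∀ x ∈ Icc (0:ℝ) n, ‖_root_.Pop f x‖ ≤ A := fun x hx =>
    (intervalIntegral.norm_integral_le_integral_norm hx.1).trans
      (intervalIntegral.integral_mono_interval le_rfl hx.1 hx.2
        (Filter.Eventually.of_forall fun _ => norm_nonneg _)
        (hfc.norm.intervalIntegrable_of_Ici hn0))
  have hA0 : 0 ≤ A := intervalIntegral.integral_nonneg hn0 fun _ _ => norm_nonneg _
  calc ∫ s in (0:ℝ)..n, ‖_root_.Pop f s‖ ≤ ∫ _ in (0:ℝ)..n, A :=
        intervalIntegral.integral_mono_on hn0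
          ((continuousOn_Pop hfc).norm.intervalIntegrable_of_Ici hn0) intervalIntegrable_const
          hPop_le
    _ = n * A := by rw [intervalIntegral.integral_const, smul_eq_mul, sub_zero]
    _ ≤ ((n:ℝ) + 1) * (c₁ * ((n:ℝ) + 1) ^ c * Real.exp ((n:ℝ) / 2)) :=
        mul_le_mul (by linarith) (hbound n hn) hA0 (by positivity)
    _ = c₁ * ((n:ℝ) + 1) ^ (c + 1) * Real.exp ((n:ℝ) / 2) := by
        rw [Real.rpow_add_one (by positivity)]; ring

end memRwC

namespace memRw

variable {f g : ℝ → ℂ}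

theorem continuousOn (hf : memRw f) : ContinuousOn f (Ici 0) := by
  obtain ⟨_, _, hfc, _⟩ := hf
  exact hfc

theorem congr (hf : memRw f) (hfg : EqOn f g (Ici 0)) : memRw g := by
  obtain ⟨c, hc, hfc, c₁, hc₁, hbound⟩ := hf
  refine ⟨c, hc, hfc.congr hfg.symm, c₁, hc₁, fun n hn => ?_⟩
  refine (Eq.le ?_).trans (hbound n hn)
  refine intervalIntegral.integral_congr fun s hs => ?_
  rw [uIcc_of_le n.cast_nonneg] at hs
  simp only [hfg hs.1]

theorem Lop_add_const (hf : memRw f) (K : ℂ) : memRw (fun x => Lop f x + K) := by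
  obtain ⟨c, hc, hfc⟩ := hf
  refine ⟨c + 1, by positivity, ?_⟩
  exact ((hfc.mono (by linarith)).sub hfc.Pop).add ((memRwC.const K).mono (by linarith))

end memRw

theorem Lop_maps_Fw_to_Fw_pred_general (m : ℕ) (f : ℝ → ℂ) (hf : memFw m f) :
    memFw (m - 1) (Lop f) := by
  obtain ⟨hfc, p, hpm, hg⟩ := hf
  set g : ℝ → ℂ := fun ℓ => f ℓ - p.eval (ℓ:ℂ) * Complex.exp ℓ
  obtain ⟨P, hPp, hPp_deg⟩ := exists_add_derivative_eq p
  refine ⟨hfc.sub (continuousOn_Pop hfc), derivative P,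
    degree_derivative_lt_pred (hPp_deg.trans_lt hpm), (hg.Lop_add_const (P.eval 0)).congr ?_⟩
  intro x hx
  have hsplit : f = fun t => g t + (P + derivative P).eval (t:ℂ) * Complex.exp t := by
    funext t; rw [hPp]; ring
  have hpe : Continuous fun t : ℝ => (P + derivative P).eval (t:ℂ) * Complex.exp t := by fun_prop
  have hLop : Lop f x = Lop g x + ((derivative P).eval (x:ℂ) * Complex.exp x + P.eval 0) := by
    rw [hsplit, Lop_add (hg.continuousOn.intervalIntegrable_of_Ici hx) (hpe.intervalIntegrable _ _),
      Lop_add_derivative_eval_mul_exp]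
  simp only [hLop]
  ring

/-- for `m ≥ 1`, the operator `𝓛` maps `𝓕_w^m` into `𝓕_w^{m−1}`
(where `𝓕_w^0 = 𝓡_w`). -/
theorem Lop_maps_Fw_to_Fw_pred (m : ℕ) (hm : 1 ≤ m) (f : ℝ → ℂ) (hf : memFw m f) :
    memFw (m - 1) (Lop f) :=
  Lop_maps_Fw_to_Fw_pred_general m f hf
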